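/- Let q be a complex number with |q| = 1 and let V₁, V₂ be isometries on a complex Hilbert space H satisfying V₂V₁* = q V₁*V₂. Then V₁V₂ = q V₂V₁; in particular (V₁,V₂) is doubly q-commutative. -/

import Mathlib

/-!
Put `T = V₁V₂ - q V₂V₁`. Taking adjoints in `V₂V₁* = q V₁*V₂` gives `V₁V₂* = q̄ V₂*V₁`, and with
`|q| = 1` both relations can be solved for `V₁*V₂` and `V₂*V₁`. Expanding `T*T`, the two diagonal
terms collapse to `1` because the `Vᵢ` are isometries and the two cross terms to `|q|² = 1`, so
`T*T = 0` and hence `T = 0` by the C*-identity.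
-/

open ContinuousLinearMap

theorem star_mul_self_sub_smul_mul_comm_eq_zero {A : Type*} [Ring A] [StarRing A] [Algebra ℂ A]
    [StarModule ℂ A] {a b : A} {q : ℂ} (ha : star a * a = 1)
    (hb : star b * b = 1) (hq : star q * q = 1) (h : b * star a = q • (star a * b)) :
    star (a * b - q • (b * a)) * (a * b - q • (b * a)) = 0 := by
  have hab : star a * b = star q • (b * star a) := by
    rw [h, smul_smul, hq, one_smul]
  have hba : star b * a = q • (a * star b) := by
    have h' : a * star b = star q • (star b * a) := by
      simpa only [star_mul, star_star, star_smul] using congrArg star h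
    rw [h', smul_smul, mul_comm, hq, one_smul]
  have t₁ : star b * star a * (a * b) = 1 := by
    rw [mul_assoc, ← mul_assoc (star a), ha, one_mul, hb]
  have t₂ : star b * star a * (b * a) = star q • 1 := by
    rw [mul_assoc, ← mul_assoc (star a), hab, smul_mul_assoc, mul_smul_comm, ← mul_assoc,
      ← mul_assoc, hb, one_mul, ha]
  have t₃ : star a * star b * (a * b) = q • 1 := by
    rw [mul_assoc, ← mul_assoc (star b), hba, smul_mul_assoc, mul_smul_comm, ← mul_assoc,
      ← mul_assoc, ha, one_mul, hb]
  have t₄ : star a * star b * (b * a) = 1 := by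
    rw [mul_assoc, ← mul_assoc (star b), hb, one_mul, ha]
  simp only [star_sub, star_smul, star_mul, sub_mul, mul_sub, smul_mul_assoc, mul_smul_comm,
    t₁, t₂, t₃, t₄, smul_smul, hq]
  simp

theorem mul_eq_smul_mul_of_mul_star_eq {A : Type*} [CStarAlgebra A] {a b : A} {q : ℂ}
    (ha : star a * a = 1) (hb : star b * b = 1) (hq : star q * q = 1)
    (h : b * star a = q • (star a * b)) : a * b = q • (b * a) :=
  sub_eq_zero.mp <| (CStarRing.star_mul_self_eq_zero_iff _).mp <|
    star_mul_self_sub_smul_mul_comm_eq_zero ha hb hq h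

theorem stmt_3 {H : Type*} [NormedAddCommGroup H] [InnerProductSpace ℂ H] [CompleteSpace H]
    (q : ℂ) (hq : ‖q‖ = 1) (V₁ V₂ : H →L[ℂ] H)
    (hV₁ : adjoint V₁ ∘L V₁ = 1) (hV₂ : adjoint V₂ ∘L V₂ = 1)
    (h : V₂ ∘L adjoint V₁ = q • (adjoint V₁ ∘L V₂)) :
    V₁ ∘L V₂ = q • (V₂ ∘L V₁) ∧
    -- in particular, (V₁, V₂) is doubly q-commutative
    (V₁ ∘L V₂ = q • (V₂ ∘L V₁) ∧ V₂ ∘L adjoint V₁ = q • (adjoint V₁ ∘L V₂)) := by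
  have hq' : star q * q = 1 := by
    rw [← starRingEnd_apply, Complex.conj_mul', hq]
    norm_num
  simp only [← star_eq_adjoint, ← mul_def] at hV₁ hV₂ h ⊢
  have hcomm := mul_eq_smul_mul_of_mul_star_eq hV₁ hV₂ hq' h
  exact ⟨hcomm, hcomm, h⟩
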